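/- arXiv:2409.11344 — 3 statements merged into one kernel-verified Lean document; each statement's English description precedes it below -/
import Mathlib

section
/- For every sequence φ = (φ_i)_{i≥1} of real numbers, every l ≥ 1 and every n ≥ l−1, one has Be_{n+1}^φ(x) = φ_l·Be_n^{φ^{{l}}}(x) + x·(Be_n^{φ^{{l}}}(x) + (Be_n^{φ^{{l}}})'(x)). -/
open Polynomial

/-- The Bell polynomials: `Bell 0 = 1`, `Bell (n+1) = x·(Bell n + (Bell n)')`. -/
noncomputable def Bell : ℕ → Polynomial ℝ
  | 0 => 1
  | n + 1 => X * (Bell n + derivative (Bell n))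

/-- `Phi φ n i` is the elementary symmetric polynomial of degree `i` in `φ 1, …, φ n`. -/
noncomputable def Phi (φ : ℕ → ℝ) (n i : ℕ) : ℝ :=
  ∑ s ∈ Finset.powersetCard i (Finset.Icc 1 n), ∏ j ∈ s, φ j

/-- The generalized Bell polynomial `Be_n^φ = ∑_{j=0}^n Φ^n_{n-j} Be_j`. -/
noncomputable def genBell (φ : ℕ → ℝ) (n : ℕ) : Polynomial ℝ :=
  ∑ j ∈ Finset.range (n + 1), C (Phi φ n (n - j)) * Bell j

/-- The sequence `φ^{{l}}` obtained from `φ` by removing its `l`-th term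
(sequences indexed from 1). -/
def removeIdx (φ : ℕ → ℝ) (l : ℕ) (i : ℕ) : ℝ := if i < l then φ i else φ (i + 1)

/-- The sequence `φ^{l,M}`, obtained by adding `M` to the `l`-th term of `φ`. -/
def addAt (φ : ℕ → ℝ) (l : ℕ) (M : ℝ) (i : ℕ) : ℝ := φ i + if i = l then M else 0

/-- A finite set `U` of reals interlaces a finite set `V` if between any two consecutive
elements of `U` there lies exactly one element of `V`, and either `|U| = |V| + 1`, or
`|U| = |V|` and `max U < max V`. -/
def Interlaces (U V : Finset ℝ) : Prop :=
  (∀ u₁ ∈ U, ∀ u₂ ∈ U, u₁ < u₂ → (∀ u ∈ U, ¬(u₁ < u ∧ u < u₂)) →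
    ∃! v, v ∈ V ∧ u₁ < v ∧ v < u₂) ∧
  (U.card = V.card + 1 ∨ (U.card = V.card ∧ U.max < V.max))

/-- `zeta φ n k` is the `k`-th zero (in increasing order, `k` counted from 1) of the
generalized Bell polynomial `Be_n^φ`. -/
noncomputable def zeta (φ : ℕ → ℝ) (n k : ℕ) : ℝ :=
  ((genBell φ n).roots.toFinset.sort (· ≤ ·)).getD (k - 1) 0

/-- The skipping embedding `j ↦ j` for `j < l`, `j ↦ j+1` otherwise. -/
def eEmb (l : ℕ) : ℕ ↪ ℕ :=
  ⟨fun j => if j < l then j else j + 1, by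
    intro a b h
    dsimp at h
    split_ifs at h <;> omega⟩

@[simp] lemma eEmb_apply (l j : ℕ) : eEmb l j = if j < l then j else j + 1 := rfl

lemma map_eEmb (l n : ℕ) (hl : 1 ≤ l) (hn : l ≤ n + 1) :
    (Finset.Icc 1 n).map (eEmb l) = (Finset.Icc 1 (n + 1)).erase l := by
  ext j
  simp only [Finset.mem_map, Finset.mem_Icc, Finset.mem_erase, eEmb_apply,
    Function.Embedding.coeFn_mk]
  constructor
  · rintro ⟨a, ha, rfl⟩
    split_ifs <;> omega
  · rintro ⟨hj, h1, h2⟩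
    by_cases h : j < l
    · exact ⟨j, by omega, by simp [h]⟩
    · refine ⟨j - 1, by omega, ?_⟩
      rw [if_neg (by omega)]
      omega

lemma Phi_remove (φ : ℕ → ℝ) (l n i : ℕ) (hl : 1 ≤ l) (hn : l ≤ n + 1) :
    Phi (removeIdx φ l) n i =
      ∑ s ∈ Finset.powersetCard i ((Finset.Icc 1 (n + 1)).erase l), ∏ j ∈ s, φ j := by
  rw [Phi, ← map_eEmb l n hl hn, Finset.powersetCard_map, Finset.sum_map]
  refine Finset.sum_congr rfl fun s _ => ?_
  rw [show (Finset.mapEmbedding (eEmb l)).toEmbedding s = s.map (eEmb l) from rfl,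
    Finset.prod_map]
  refine Finset.prod_congr rfl fun j _ => ?_
  simp only [removeIdx, eEmb_apply, Function.Embedding.coeFn_mk]
  split_ifs <;> rfl

lemma Phi_zero (φ : ℕ → ℝ) (n : ℕ) : Phi φ n 0 = 1 := by
  simp [Phi]

lemma Phi_top (φ : ℕ → ℝ) (n i : ℕ) (h : n < i) : Phi φ n i = 0 := by
  rw [Phi, Finset.powersetCard_eq_empty.2 (by simpa using h), Finset.sum_empty]

lemma Phi_succ_remove (φ : ℕ → ℝ) (l n i : ℕ) (hl : 1 ≤ l) (hn : l ≤ n + 1) :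
    Phi φ (n + 1) (i + 1) =
      φ l * Phi (removeIdx φ l) n i + Phi (removeIdx φ l) n (i + 1) := by
  have hm : l ∈ Finset.Icc 1 (n + 1) := Finset.mem_Icc.2 ⟨hl, hn⟩
  rw [Phi, ← Finset.insert_erase hm,
    Finset.powersetCard_succ_insert (Finset.notMem_erase _ _),
    Finset.sum_union]
  · rw [Phi_remove φ l n i hl hn, Phi_remove φ l n (i + 1) hl hn]
    rw [Finset.sum_image, Finset.mul_sum, add_comm]
    · congr 1
      refine Finset.sum_congr rfl fun s hs => ?_
      have hls : l ∉ s := fun h => Finset.notMem_erase l _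
        ((Finset.mem_powersetCard.1 hs).1 h)
      rw [Finset.prod_insert hls]
    · intro s hs t ht hst
      have hls : l ∉ s := fun h => Finset.notMem_erase l _
        ((Finset.mem_powersetCard.1 hs).1 h)
      have hlt : l ∉ t := fun h => Finset.notMem_erase l _
        ((Finset.mem_powersetCard.1 ht).1 h)
      rwa [Finset.insert_erase_invOn.2.injOn.eq_iff] at hst <;>
        simp [Set.mem_setOf_eq, hls, hlt]
  · rw [Finset.disjoint_right]
    intro s hs
    simp only [Finset.mem_image] at hs
    obtain ⟨t, ht, rfl⟩ := hs
    intro hmem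
    have := (Finset.mem_powersetCard.1 hmem).1 (Finset.mem_insert_self l t)
    exact Finset.notMem_erase l _ this

/-- for `l ≥ 1` and `n ≥ l − 1`,
`Be_{n+1}^φ = φ_l·Be_n^{φ^{{l}}} + x·(Be_n^{φ^{{l}}} + (Be_n^{φ^{{l}}})')`. -/
theorem genBell_recurrence_remove (φ : ℕ → ℝ) (l n : ℕ) (hl : 1 ≤ l) (hn : l - 1 ≤ n) :
    genBell φ (n + 1) =
      C (φ l) * genBell (removeIdx φ l) n +
        X * (genBell (removeIdx φ l) n + derivative (genBell (removeIdx φ l) n)) := by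
  have hn' : l ≤ n + 1 := by omega
  set ψ := removeIdx φ l with hψ
  have hX : X * (genBell ψ n + derivative (genBell ψ n)) =
      ∑ j ∈ Finset.range (n + 1), C (Phi ψ n (n - j)) * Bell (j + 1) := by
    rw [genBell, derivative_sum, ← Finset.sum_add_distrib, Finset.mul_sum]
    refine Finset.sum_congr rfl fun j _ => ?_
    rw [derivative_C_mul]
    show X * (C (Phi ψ n (n - j)) * Bell j + C (Phi ψ n (n - j)) * derivative (Bell j)) =
      C (Phi ψ n (n - j)) * (X * (Bell j + derivative (Bell j)))
    ring
  have hC : C (φ l) * genBell ψ n =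
      ∑ j ∈ Finset.range (n + 1), C (φ l * Phi ψ n (n - j)) * Bell j := by
    rw [genBell, Finset.mul_sum]
    refine Finset.sum_congr rfl fun j _ => ?_
    rw [C_mul, mul_assoc]
  rw [hX, hC, genBell]
  rw [Finset.sum_range_succ' (fun j => C (Phi φ (n + 1) (n + 1 - j)) * Bell j) (n + 1)]
  rw [Finset.sum_range_succ' (fun j => C (φ l * Phi ψ n (n - j)) * Bell j) n]
  rw [Finset.sum_range_succ (fun j => C (Phi ψ n (n - j)) * Bell (j + 1)) n]
  have h0 : Phi φ (n + 1) (n + 1 - 0) = φ l * Phi ψ n (n - 0) := by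
    have := Phi_succ_remove φ l n n hl hn'
    rw [Phi_top ψ n (n + 1) (by omega)] at this
    simpa using this
  have htop : Phi φ (n + 1) (n + 1 - (n + 1)) = Phi ψ n (n - n) := by
    simp [Phi_zero]
  rw [Finset.sum_range_succ (fun j => C (Phi φ (n + 1) (n + 1 - (j + 1))) * Bell (j + 1)) n]
  rw [h0, htop]
  have hmid : ∀ j ∈ Finset.range n,
      C (Phi φ (n + 1) (n + 1 - (j + 1))) * Bell (j + 1) =
        C (φ l * Phi ψ n (n - (j + 1))) * Bell (j + 1) +
          C (Phi ψ n (n - j)) * Bell (j + 1) := by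
    intro j hj
    have hjn : j < n := Finset.mem_range.1 hj
    have : n + 1 - (j + 1) = (n - (j + 1)) + 1 := by omega
    rw [this, Phi_succ_remove φ l n (n - (j + 1)) hl hn']
    have : n - (j + 1) + 1 = n - j := by omega
    rw [this, C_add, add_mul]
  rw [Finset.sum_congr rfl hmid, Finset.sum_add_distrib]
  ring
end

section
/- Let α be a real number and let φ^α be the sequence φ^α_i = α + i. Then for every n ≥ 0 and every real x, Be_n^{φ^α}(x) = Σ_{j=0}^n (n! / (j!·(n−j)!)) · ((α+j+1)(α+j+2)⋯(α+n)) · x^j; that is, Be_n^{φ^α}(x) = n!·L_n^{(α)}(−x), where L_n^{(α)} is the generalized Laguerre polynomial. -/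
open Polynomial

/-- The generalized Laguerre polynomial
`L_n^{(α)}(x) = ∑_{j=0}^n ((−1)^j/j!)·((α+j+1)⋯(α+n)/(n−j)!)·x^j`. -/
noncomputable def laguerre (α : ℝ) (n : ℕ) : Polynomial ℝ :=
  ∑ j ∈ Finset.range (n + 1),
    C ((-1 : ℝ) ^ j / (j.factorial : ℝ) *
        ((∏ i ∈ Finset.Icc (j + 1) n, (α + (i : ℝ))) / ((n - j).factorial : ℝ))) * X ^ j

lemma Phi_eq_zero (φ : ℕ → ℝ) {n i : ℕ} (h : n < i) : Phi φ n i = 0 := by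
  have : (Finset.Icc 1 n).card < i := by simp [Nat.card_Icc]; omega
  simp [Phi, Finset.powersetCard_eq_empty.2 this]

lemma Phi_succ (φ : ℕ → ℝ) (n i : ℕ) :
    Phi φ (n+1) (i+1) = Phi φ n (i+1) + φ (n+1) * Phi φ n i := by
  have hn : (n+1) ∉ Finset.Icc 1 n := by simp
  have hIcc : Finset.Icc 1 (n+1) = insert (n+1) (Finset.Icc 1 n) := (Finset.insert_Icc_right_eq_Icc_add_one (by omega)).symm
  rw [Phi, hIcc, Finset.powersetCard_succ_insert hn, Finset.sum_union]
  · congr 1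
    rw [Finset.sum_image]
    · rw [Phi, Finset.mul_sum]
      refine Finset.sum_congr rfl fun s hs => ?_
      have hns : (n+1) ∉ s := fun hmem => hn ((Finset.mem_powersetCard.1 hs).1 hmem)
      rw [Finset.prod_insert hns]
    · intro s hs t ht hst
      have hns : (n+1) ∉ s := fun hmem => hn ((Finset.mem_powersetCard.1 hs).1 hmem)
      have hnt : (n+1) ∉ t := fun hmem => hn ((Finset.mem_powersetCard.1 ht).1 hmem)
      have := congrArg (Finset.erase · (n+1)) hst
      simpa [Finset.erase_insert hns, Finset.erase_insert hnt] using this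
  · rw [Finset.disjoint_right]
    intro s hs hs'
    obtain ⟨t, ht, rfl⟩ := Finset.mem_image.1 hs
    have hnt : (n+1) ∉ t := fun hmem => hn ((Finset.mem_powersetCard.1 ht).1 hmem)
    exact hn ((Finset.mem_powersetCard.1 hs').1 (Finset.mem_insert_self _ _))

lemma genBell_succ (φ : ℕ → ℝ) (n : ℕ) :
    genBell φ (n+1) = (X + C (φ (n+1))) * genBell φ n + X * derivative (genBell φ n) := by
  have step1 : genBell φ (n+1)
      = (∑ j ∈ Finset.range (n+1), C (Phi φ n (n+1-j)) * Bell j)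
        + C (φ (n+1)) * genBell φ n + Bell (n+1) := by
    rw [genBell, Finset.sum_range_succ]
    have h1 : ∀ j ∈ Finset.range (n+1), C (Phi φ (n+1) (n+1-j)) * Bell j
        = C (Phi φ n (n+1-j)) * Bell j + C (φ (n+1)) * (C (Phi φ n (n-j)) * Bell j) := by
      intro j hj
      have hj' : j ≤ n := by simpa [Nat.lt_succ_iff] using hj
      have e1 : n+1-j = (n-j)+1 := by omega
      rw [e1, Phi_succ, C_add, C_mul]
      ring
    rw [Finset.sum_congr rfl h1, Finset.sum_add_distrib, ← Finset.mul_sum, ← genBell]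
    simp [Phi_zero]
  have step2 : (∑ j ∈ Finset.range (n+1), C (Phi φ n (n+1-j)) * Bell j) + Bell (n+1)
      = ∑ j ∈ Finset.range (n+1), C (Phi φ n (n-j)) * Bell (j+1) := by
    rw [Finset.sum_range_succ']
    have h0 : C (Phi φ n (n+1-0)) * Bell 0 = 0 := by
      rw [Phi_eq_zero φ (by omega)]; simp
    rw [h0, add_zero, Finset.sum_range_succ]
    have : ∀ j ∈ Finset.range n, C (Phi φ n (n+1-(j+1))) * Bell (j+1)
        = C (Phi φ n (n-j)) * Bell (j+1) := by
      intro j hj; rw [show n+1-(j+1) = n-j by omega]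
    rw [Finset.sum_congr rfl this]
    rw [Nat.sub_self, Phi_zero]
    simp
  have step3 : ∑ j ∈ Finset.range (n+1), C (Phi φ n (n-j)) * Bell (j+1)
      = X * genBell φ n + X * derivative (genBell φ n) := by
    rw [genBell, derivative_sum, Finset.mul_sum, Finset.mul_sum, ← Finset.sum_add_distrib]
    refine Finset.sum_congr rfl fun j hj => ?_
    show C (Phi φ n (n-j)) * Bell (j+1) = _
    rw [show Bell (j+1) = X * (Bell j + derivative (Bell j)) from rfl,
      derivative_C_mul]
    ring
  rw [step1, add_right_comm, step2, step3]; ring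

noncomputable def lagA (α : ℝ) (n j : ℕ) : ℝ :=
  (n.factorial : ℝ) / ((j.factorial : ℝ) * ((n - j).factorial : ℝ)) *
    ∏ i ∈ Finset.Icc (j + 1) n, (α + (i : ℝ))

noncomputable def lagP (α : ℝ) (n : ℕ) : Polynomial ℝ :=
  ∑ j ∈ Finset.range (n + 1), C (lagA α n j) * X ^ j

lemma lagP_coeff (α : ℝ) (n k : ℕ) :
    (lagP α n).coeff k = if k ≤ n then lagA α n k else 0 := by
  rw [lagP, finset_sum_coeff]
  simp only [coeff_C_mul, coeff_X_pow, mul_ite, mul_one, mul_zero]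
  rw [Finset.sum_ite_eq (Finset.range (n+1)) k (fun j => lagA α n j)]
  simp [Nat.lt_succ_iff]

lemma lagA_self (α : ℝ) (n : ℕ) : lagA α n n = 1 := by
  have : Finset.Icc (n+1) n = ∅ := by rw [Finset.Icc_eq_empty]; omega
  simp [lagA, this, Nat.factorial_ne_zero,
    div_self ((Nat.cast_ne_zero (R := ℝ)).mpr (Nat.factorial_ne_zero n))]

lemma lagA_key (α : ℝ) (n k : ℕ) (h : k < n) :
    lagA α (n+1) (k+1)
      = lagA α n k + ((α + ((n:ℝ)+1)) + ((k:ℝ)+1)) * lagA α n (k+1) := by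
  obtain ⟨m, rfl⟩ : ∃ m, n = k + 1 + m := ⟨n - (k+1), by omega⟩
  have hsub1 : k + 1 + m + 1 - (k + 1) = m + 1 := by omega
  have hsub2 : k + 1 + m - k = m + 1 := by omega
  have hsub3 : k + 1 + m - (k + 1) = m := by omega
  have hp1 : ∏ i ∈ Finset.Icc (k+2) (k+1+m+1), (α + (i:ℝ))
      = (∏ i ∈ Finset.Icc (k+2) (k+1+m), (α + (i:ℝ))) * (α + ((k:ℝ)+m+2)) := by
    rw [show k+1+m+1 = (k+1+m)+1 from rfl, Finset.prod_Icc_succ_top (by omega)]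
    push_cast; ring
  have hp2 : ∏ i ∈ Finset.Icc (k+1) (k+1+m), (α + (i:ℝ))
      = (α + ((k:ℝ)+1)) * ∏ i ∈ Finset.Icc (k+2) (k+1+m), (α + (i:ℝ)) := by
    rw [← Finset.insert_Icc_add_one_left_eq_Icc (by omega), Finset.prod_insert (by simp)]
    push_cast; ring
  have ef1 : (((k+1+m+1).factorial : ℕ) : ℝ) = ((k:ℝ)+m+2) * ((k+1+m).factorial : ℕ) := by
    rw [show k+1+m+1 = (k+1+m)+1 from rfl, Nat.factorial_succ]; push_cast; ring
  have ef2 : (((k+1).factorial : ℕ) : ℝ) = ((k:ℝ)+1) * (k.factorial : ℕ) := by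
    rw [Nat.factorial_succ]; push_cast; ring
  have ef3 : (((m+1).factorial : ℕ) : ℝ) = ((m:ℝ)+1) * (m.factorial : ℕ) := by
    rw [Nat.factorial_succ]; push_cast; ring
  rw [lagA, lagA, lagA, hsub1, hsub2, hsub3, show k+1+1 = k+2 from rfl, hp1, hp2,
    ef1, ef2, ef3]
  have h1 : ((k.factorial : ℕ) : ℝ) ≠ 0 := by exact_mod_cast Nat.factorial_ne_zero k
  have h2 : ((m.factorial : ℕ) : ℝ) ≠ 0 := by exact_mod_cast Nat.factorial_ne_zero m
  have h3 : ((k:ℝ)+1) ≠ 0 := by positivity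
  have h4 : ((m:ℝ)+1) ≠ 0 := by positivity
  field_simp
  push_cast
  ring

lemma lagA_zero (α : ℝ) (n : ℕ) : lagA α n 0 = ∏ i ∈ Finset.Icc 1 n, (α + (i:ℝ)) := by
  simp [lagA, div_self ((Nat.cast_ne_zero (R := ℝ)).mpr (Nat.factorial_ne_zero n))]

lemma lagP_succ (α : ℝ) (n : ℕ) :
    lagP α (n+1) = (X + C (α + ((n:ℝ)+1))) * lagP α n + X * derivative (lagP α n) := by
  ext k
  simp only [coeff_add, add_mul, coeff_C_mul]
  rcases k with _ | k
  · simp only [mul_coeff_zero, coeff_X_zero, zero_mul, lagP_coeff, Nat.zero_le, if_true,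
      zero_add, add_zero]
    rw [lagA_zero, lagA_zero, Finset.prod_Icc_succ_top (by omega)]
    push_cast; ring
  · rw [coeff_X_mul, coeff_X_mul, coeff_derivative]
    simp only [lagP_coeff]
    rcases lt_trichotomy k n with h | rfl | h
    · rw [if_pos (show k+1 ≤ n+1 by omega), if_pos (show k ≤ n by omega),
        if_pos (show k+1 ≤ n by omega), lagA_key α n k h]
      push_cast; ring
    · rw [if_pos (show k+1 ≤ k+1 by omega), if_pos (show k ≤ k by omega),
        if_neg (show ¬ k+1 ≤ k by omega), lagA_self, lagA_self]
      ring
    · rw [if_neg (show ¬ k+1 ≤ n+1 by omega), if_neg (show ¬ k ≤ n by omega),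
        if_neg (show ¬ k+1 ≤ n by omega)]
      ring

lemma genBell_eq_lagP (α : ℝ) (n : ℕ) : genBell (fun i => α + (i : ℝ)) n = lagP α n := by
  induction n with
  | zero =>
    rw [genBell, lagP]
    simp [Phi_zero, lagA, show Bell 0 = 1 from rfl]
  | succ n ih =>
    rw [genBell_succ, ih, lagP_succ]
    push_cast
    ring_nf

/-- for the sequence `φ^α_i = α + i`,
`Be_n^{φ^α}(x) = ∑_{j=0}^n (n!/(j!(n−j)!))·((α+j+1)⋯(α+n))·x^j`, i.e.
`Be_n^{φ^α}(x) = n!·L_n^{(α)}(−x)`. -/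
theorem genBell_laguerre (α : ℝ) (n : ℕ) :
    genBell (fun i => α + (i : ℝ)) n =
      ∑ j ∈ Finset.range (n + 1),
        C ((n.factorial : ℝ) / ((j.factorial : ℝ) * ((n - j).factorial : ℝ)) *
            ∏ i ∈ Finset.Icc (j + 1) n, (α + (i : ℝ))) * X ^ j ∧
    ∀ x : ℝ, (genBell (fun i => α + (i : ℝ)) n).eval x =
      (n.factorial : ℝ) * (laguerre α n).eval (-x) := by
  constructor
  · rw [genBell_eq_lagP]; rfl
  · intro x
    rw [genBell_eq_lagP, lagP, laguerre]
    simp only [eval_finset_sum, eval_mul, eval_pow, eval_C, eval_X, eval_neg, Finset.mul_sum]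
    refine Finset.sum_congr rfl fun j hj => ?_
    have hsq : ((-1 : ℝ)) ^ j * (-1) ^ j = 1 := by
      rw [← mul_pow]; norm_num
    have key : ((-1 : ℝ)) ^ j * (-x) ^ j = x ^ j := by
      rw [← mul_pow, neg_one_mul, neg_neg]
    rw [lagA, ← key]
    ring
end

section
/- Let φ = (φ_i)_{i≥1} be a sequence of real numbers, let 1 ≤ l ≤ n, and let M be a real number. Then Be_n^{φ^{l,M}}(x) = Be_n^φ(x) + M·Be_{n−1}^{φ^{{l}}}(x). -/
/-! Each elementary symmetric polynomial `Φ^n_{k+1}` is affine in the single variable `φ_l`,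
with slope the elementary symmetric polynomial `Φ^{n-1}_k` of the remaining variables, which are
exactly the first `n - 1` terms of `φ^{{l}}`. Since `Φ^n_0 = 1` does not change, substituting this
into `Be_n^φ = ∑_j Φ^n_{n-j} Be_j` gives the identity term by term. -/

open Polynomial

open Finset

theorem Multiset.esymm_cons_succ {R : Type*} [CommSemiring R] (a : R) (s : Multiset R) (k : ℕ) :
    (a ::ₘ s).esymm (k + 1) = s.esymm (k + 1) + a * s.esymm k := by
  simp [Multiset.esymm, Multiset.powersetCard_cons, Multiset.sum_map_mul_left]

theorem Phi_eq_esymm (φ : ℕ → ℝ) (n i : ℕ) :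
    Phi φ n i = ((Icc 1 n).val.map φ).esymm i :=
  (esymm_map_val φ _ i).symm

def skipIdx (l i : ℕ) : ℕ := if i < l then i else i + 1

theorem removeIdx_eq_comp_skipIdx (φ : ℕ → ℝ) (l : ℕ) :
    removeIdx φ l = φ ∘ skipIdx l := by
  funext i
  simp only [removeIdx, Function.comp_apply, skipIdx, apply_ite φ]

theorem skipIdx_injective (l : ℕ) : Function.Injective (skipIdx l) :=
  (strictMono_nat_of_lt_succ fun i => by unfold skipIdx; split_ifs <;> omega).injective

theorem map_skipIdx_Icc {l n : ℕ} (hl : 1 ≤ l) (hln : l ≤ n) :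
    (Icc 1 (n - 1)).map ⟨skipIdx l, skipIdx_injective l⟩ = (Icc 1 n).erase l := by
  ext x
  simp only [mem_map, mem_Icc, mem_erase, Function.Embedding.coeFn_mk, skipIdx]
  constructor
  · rintro ⟨i, hi, rfl⟩
    split_ifs <;> omega
  · rintro ⟨hxl, hx⟩
    refine ⟨if x < l then x else x - 1, ?_, ?_⟩ <;> split_ifs <;> omega

theorem Phi_removeIdx {l n : ℕ} (φ : ℕ → ℝ) (hl : 1 ≤ l) (hln : l ≤ n) (k : ℕ) :
    Phi (removeIdx φ l) (n - 1) k = (((Icc 1 n).erase l).val.map φ).esymm k := by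
  rw [Phi_eq_esymm, ← map_skipIdx_Icc hl hln, map_val, Multiset.map_map,
    removeIdx_eq_comp_skipIdx]
  rfl

theorem Phi_addAt_succ {l n : ℕ} (φ : ℕ → ℝ) (hl : 1 ≤ l) (hln : l ≤ n) (M : ℝ) (k : ℕ) :
    Phi (addAt φ l M) n (k + 1) = Phi φ n (k + 1) + M * Phi (removeIdx φ l) (n - 1) k := by
  have hval : (Icc 1 n).val = l ::ₘ ((Icc 1 n).erase l).val := by
    rw [erase_val, Multiset.cons_erase (mem_Icc.2 ⟨hl, hln⟩)]
  have hoff : ∀ i ∈ ((Icc 1 n).erase l).val, addAt φ l M i = φ i := fun i hi => by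
    simp [addAt, (mem_erase.1 (mem_def.2 hi)).1]
  rw [Phi_eq_esymm, Phi_eq_esymm, Phi_removeIdx φ hl hln, hval, Multiset.map_cons,
    Multiset.map_cons, Multiset.map_congr rfl hoff, Multiset.esymm_cons_succ,
    Multiset.esymm_cons_succ]
  simp only [addAt, if_true]
  ring

theorem genBell_succ_s5 (φ : ℕ → ℝ) (m : ℕ) :
    genBell φ (m + 1) =
      ∑ j ∈ range (m + 1), C (Phi φ (m + 1) (m - j + 1)) * Bell j + Bell (m + 1) := by
  rw [genBell, sum_range_succ, Nat.sub_self, Phi, powersetCard_zero, sum_singleton, prod_empty,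
    C_1, one_mul]
  congr 1
  refine sum_congr rfl fun j hj => ?_
  rw [show m + 1 - j = m - j + 1 by have := mem_range.1 hj; omega]

/-- for `1 ≤ l ≤ n` and `M : ℝ`,
`Be_n^{φ^{l,M}} = Be_n^φ + M·Be_{n−1}^{φ^{{l}}}`. -/
theorem genBell_addAt (φ : ℕ → ℝ) (l n : ℕ) (hl : 1 ≤ l) (hln : l ≤ n) (M : ℝ) :
    genBell (addAt φ l M) n = genBell φ n + C M * genBell (removeIdx φ l) (n - 1) := by
  obtain ⟨m, rfl⟩ : ∃ m, n = m + 1 := ⟨n - 1, by omega⟩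
  rw [genBell_succ_s5, genBell_succ_s5, Nat.add_sub_cancel, genBell, mul_sum]
  simp only [Phi_addAt_succ φ hl hln, map_add, map_mul, add_mul, sum_add_distrib,
    Nat.add_sub_cancel, mul_assoc]
  ring
end
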